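/- Let μ be a Borel probability measure on [0,1], let 0 < β < 1 and set β' = (1+β)/2. Suppose that (x_i)_{i≥0}, (x̃_i)_{i≥0} are points of [0,1] and (r_i)_{i≥0}, (r̃_i)_{i≥0} are positive radii with r_0 > r̃_0 > r_1 > r̃_1 > ... such that for every i ≥ 1: (a) the closure of B(x_i, r_i) is contained in B(x̃_{i−1}, r̃_{i−1}/3), which is contained in B(x_{i−1}, r_{i−1}/3); (b) μ(B(x_i, r_i)) ≤ r_i^{β'}; (c) μ(B(x̃_{i−1}, r̃_{i−1})) = r̃_{i−1}^β; and (d) for every x in the closure of B(x_i, r_i/3) and every r > 0, if B(x,r) is not contained in B(x_i, r_i) but B(x,r) ⊂ B(x_{i−1}, r_{i−1}), then μ(B(x,r)) < 300·r^β. Then the radii tend to 0, the intersection of the closed balls closure(B(x_i,r_i)) is a single point x, and h_μ(x) = β. -/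

import Mathlib

open MeasureTheory Metric Filter Set
open scoped ENNReal Topology
open Classical

/-- The lower local dimension (local Hölder exponent) of a measure `μ` on `ℝ` at `x`:
`liminf_{r → 0⁺} log μ(B(x,r)) / log r`, with the convention that it is `+∞`
when `x` does not belong to the support of `μ`. -/
noncomputable def locDim (μ : Measure ℝ) (x : ℝ) : EReal :=
  if ∀ r : ℝ, 0 < r → 0 < μ (ball x r) then
    Filter.liminf
      (fun r : ℝ => ((Real.log ((μ (ball x r)).toReal) / Real.log r : ℝ) : EReal))
      (nhdsWithin 0 (Set.Ioi 0))
  else ⊤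

/-- Hausdorff dimension of a set, with the convention `dim ∅ = -∞`. -/
noncomputable def dimHE (s : Set ℝ) : EReal :=
  if s.Nonempty then ((dimH s : ℝ≥0∞) : EReal) else ⊥

/-- The multifractal spectrum of a measure supported in `[0,1]`:
`d_μ(h) = dim_H {x ∈ [0,1] : h_μ(x) = h}`, with `dim ∅ = -∞`. -/
noncomputable def spec (μ : Measure ℝ) (h : EReal) : EReal :=
  dimHE {x ∈ Set.Icc (0:ℝ) 1 | locDim μ x = h}

/-- A measure supported in `[0,1]` is homogeneously multifractal (HM) if its restriction to any
non-degenerate subinterval of `[0,1]` has the same multifractal spectrum as the whole measure. -/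
def IsHM (μ : Measure ℝ) : Prop :=
  ∀ a b : ℝ, 0 ≤ a → a < b → b ≤ 1 →
    ∀ h : EReal, 0 ≤ h →
      dimHE {x ∈ Set.Ioo a b | locDim μ x = h} = spec μ h

/-! Condition (a) forces `rᵢ₊₁ < rᵢ/3`, so the radii decay geometrically and the closed balls
shrink to a point `z` lying in every `B(x̃ᵢ, r̃ᵢ/3)`. Hence `B(z, 2r̃ᵢ) ⊇ B(x̃ᵢ, r̃ᵢ)` has mass at
least `r̃ᵢ^β` by (c), and the exponent at `z` is at most `β`. Conversely, a small `ρ` lies in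
`(2rᵢ₊₁/3, 2rᵢ/3]` for some `i`, so `B(z, ρ) ⊆ B(xᵢ, rᵢ)`. Either `B(z, ρ) ⊆ B(xᵢ₊₁, rᵢ₊₁)`,
of mass at most `rᵢ₊₁^((1+β)/2) ≤ (3ρ/2)^((1+β)/2) ≤ (3/2) ρ^β` by (b), or (d) applies; in both
cases `μ(B(z, ρ)) ≤ 300 ρ^β`, and the exponent is at least `β`. -/

lemma exists_and_not_succ_of_exists_not {P : ℕ → Prop} (h0 : P 0) (h : ∃ n, ¬P n) :
    ∃ i, P i ∧ ¬P (i + 1) := by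
  by_contra! hP
  obtain ⟨n, hn⟩ := h
  exact hn (Nat.rec h0 hP n)

lemma tendsto_zero_of_le_geom {u : ℕ → ℝ} {c : ℝ} (hc0 : 0 ≤ c) (hc1 : c < 1)
    (hu0 : ∀ n, 0 ≤ u n) (hu : ∀ n, u (n + 1) ≤ c * u n) : Tendsto u atTop (𝓝 0) :=
  squeeze_zero hu0 (fun n => le_geom hc0 n fun k _ => hu k) <| by
    simpa using (tendsto_pow_atTop_nhds_zero_of_lt_one hc0 hc1).mul_const (u 0)

lemma Real.lt_of_closedBall_subset_ball {a b s t : ℝ} (hs : 0 ≤ s)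
    (h : closedBall a s ⊆ ball b t) : s < t := by
  rw [Real.closedBall_eq_Icc, Real.ball_eq_Ioo, Icc_subset_Ioo_iff (by linarith)] at h
  linarith [h.1, h.2]

lemma exists_iInter_closedBall_eq_singleton {X : Type*} [MetricSpace X] [CompleteSpace X]
    {c : ℕ → X} {ρ : ℕ → ℝ} (hρ0 : ∀ n, 0 ≤ ρ n)
    (hnest : ∀ n, closedBall (c (n + 1)) (ρ (n + 1)) ⊆ closedBall (c n) (ρ n))
    (hρ : Tendsto ρ atTop (𝓝 0)) : ∃ z, ⋂ n, closedBall (c n) (ρ n) = {z} := by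
  have hanti : Antitone fun n => closedBall (c n) (ρ n) := antitone_nat_of_succ_le hnest
  have hdiam : Tendsto (fun n => diam (closedBall (c n) (ρ n))) atTop (𝓝 0) :=
    squeeze_zero (fun _ => diam_nonneg) (fun n => diam_closedBall (hρ0 n)) <| by
      simpa using hρ.const_mul 2
  obtain ⟨z, hz⟩ := nonempty_iInter_of_nonempty_biInter (fun _ => isClosed_closedBall)
    (fun _ => isBounded_closedBall)
    (fun N => ⟨c N, mem_iInter₂.2 fun n hn => hanti hn (mem_closedBall_self (hρ0 N))⟩) hdiam
  refine ⟨z, eq_singleton_iff_unique_mem.2 ⟨hz, fun w hw => ?_⟩⟩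
  have hdist : ∀ n, dist w z ≤ diam (closedBall (c n) (ρ n)) := fun n =>
    dist_le_diam_of_mem isBounded_closedBall (mem_iInter.1 hw n) (mem_iInter.1 hz n)
  exact dist_le_zero.1 (ge_of_tendsto' hdiam hdist)

lemma rpow_le_mul_rpow_of_le_mul {β γ K s ρ : ℝ} (hβγ : β ≤ γ) (hγ0 : 0 ≤ γ) (hγ1 : γ ≤ 1)
    (hK : 1 ≤ K) (hs : 0 ≤ s) (hsρ : s ≤ K * ρ) (hρ0 : 0 < ρ) (hρ1 : ρ ≤ 1) :
    s ^ γ ≤ K * ρ ^ β :=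
  calc s ^ γ ≤ (K * ρ) ^ γ := Real.rpow_le_rpow hs hsρ hγ0
    _ = K ^ γ * ρ ^ γ := Real.mul_rpow (by linarith) hρ0.le
    _ ≤ K * ρ ^ β :=
      mul_le_mul (Real.rpow_le_self_of_one_le hK hγ1)
        (Real.rpow_le_rpow_of_exponent_ge hρ0 hρ1 hβγ) (by positivity) (by linarith)

lemma tendsto_log_mul_rpow_div_log {C : ℝ} (hC : 0 < C) (β : ℝ) :
    Tendsto (fun ρ => Real.log (C * ρ ^ β) / Real.log ρ) (𝓝[>] 0) (𝓝 β) := by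
  have hlog := Real.tendsto_log_nhdsGT_zero
  have hsum : Tendsto (fun ρ => β + Real.log C / Real.log ρ) (𝓝[>] 0) (𝓝 β) := by
    simpa using tendsto_const_nhds.add (tendsto_const_nhds.div_atBot hlog)
  refine hsum.congr' ?_
  filter_upwards [self_mem_nhdsWithin, hlog.eventually_lt_atBot 0] with ρ hρ hlogρ
  rw [Real.log_mul hC.ne' (Real.rpow_pos_of_pos hρ β).ne', Real.log_rpow hρ]
  field_simp [hlogρ.ne]
  ring

lemma le_liminf_log_div_log {f : ℝ → ℝ} {C β : ℝ} (hC : 0 < C)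
    (hf : ∀ᶠ ρ in 𝓝[>] 0, 0 < f ρ ∧ f ρ ≤ C * ρ ^ β) :
    (β : EReal) ≤ liminf (fun ρ => ((Real.log (f ρ) / Real.log ρ : ℝ) : EReal)) (𝓝[>] 0) := by
  rw [← (EReal.tendsto_coe.2 (tendsto_log_mul_rpow_div_log hC β)).liminf_eq]
  refine liminf_le_liminf ?_
  filter_upwards [self_mem_nhdsWithin, nhdsWithin_le_nhds (gt_mem_nhds one_pos), hf]
    with ρ hρ0 hρ1 ⟨hfpos, hfle⟩
  exact EReal.coe_le_coe_iff.2 <|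
    div_le_div_of_nonpos_of_le (Real.log_neg hρ0 hρ1).le (Real.log_le_log hfpos hfle)

lemma liminf_log_div_log_le {f : ℝ → ℝ} {c β : ℝ} (hc : 0 < c) {u : ℕ → ℝ}
    (hu : Tendsto u atTop (𝓝[>] 0)) (hf : ∀ n, c * u n ^ β ≤ f (u n)) :
    liminf (fun ρ => ((Real.log (f ρ) / Real.log ρ : ℝ) : EReal)) (𝓝[>] 0) ≤ β := by
  refine hu.liminf_le_liminf_comp.trans ?_
  rw [← (EReal.tendsto_coe.2 ((tendsto_log_mul_rpow_div_log hc β).comp hu)).liminf_eq]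
  refine liminf_le_liminf ?_
  filter_upwards [hu.eventually self_mem_nhdsWithin,
    hu.eventually (nhdsWithin_le_nhds (gt_mem_nhds one_pos))] with n hn0 hn1
  exact EReal.coe_le_coe_iff.2 <| div_le_div_of_nonpos_of_le (Real.log_neg hn0 hn1).le
    (Real.log_le_log (mul_pos hc (Real.rpow_pos_of_pos hn0 β)) (hf n))

lemma locDim_eq_of_rpow_bounds (μ : Measure ℝ) [IsFiniteMeasure μ] {z β C c : ℝ}
    (hC : 0 < C) (hc : 0 < c)
    (hupper : ∀ᶠ ρ in 𝓝[>] 0, μ (ball z ρ) ≤ ENNReal.ofReal (C * ρ ^ β))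
    {u : ℕ → ℝ} (hu0 : ∀ n, 0 < u n) (hu : Tendsto u atTop (𝓝 0))
    (hlower : ∀ n, ENNReal.ofReal (c * u n ^ β) ≤ μ (ball z (u n))) :
    locDim μ z = β := by
  have hpos : ∀ ρ, 0 < ρ → 0 < μ (ball z ρ) := fun ρ hρ => by
    obtain ⟨n, hn⟩ := (hu.eventually_lt_const hρ).exists
    calc 0 < ENNReal.ofReal (c * u n ^ β) :=
          ENNReal.ofReal_pos.2 (mul_pos hc (Real.rpow_pos_of_pos (hu0 n) β))
      _ ≤ μ (ball z (u n)) := hlower n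
      _ ≤ μ (ball z ρ) := measure_mono (ball_subset_ball hn.le)
  rw [locDim, if_pos hpos]
  refine le_antisymm (liminf_log_div_log_le hc
    (tendsto_nhdsWithin_iff.2 ⟨hu, Eventually.of_forall hu0⟩) fun n => ?_)
    (le_liminf_log_div_log hC ?_)
  · exact (ENNReal.ofReal_le_iff_le_toReal (measure_ne_top _ _)).1 (hlower n)
  · filter_upwards [self_mem_nhdsWithin, hupper] with ρ hρ hle
    exact ⟨ENNReal.toReal_pos (hpos ρ hρ).ne' (measure_ne_top _ _),
      ENNReal.toReal_le_of_le_ofReal (mul_pos hC (Real.rpow_pos_of_pos hρ β)).le hle⟩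

lemma measure_ball_le_of_nested (μ : Measure ℝ) {β : ℝ} (hβ0 : 0 < β) (hβ1 : β < 1)
    {x r : ℕ → ℝ} (hrpos : ∀ i, 0 < r i) (hr : Tendsto r atTop (𝓝 0))
    (hb : ∀ i, μ (ball (x (i + 1)) (r (i + 1)))
      ≤ ENNReal.ofReal (r (i + 1) ^ ((1 + β) / 2)))
    (hd : ∀ i, ∀ y ∈ closure (ball (x (i + 1)) (r (i + 1) / 3)), ∀ ρ : ℝ, 0 < ρ →
      ¬ ball y ρ ⊆ ball (x (i + 1)) (r (i + 1)) → ball y ρ ⊆ ball (x i) (r i) →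
      μ (ball y ρ) < ENNReal.ofReal (300 * ρ ^ β))
    {z : ℝ} (hz : ∀ i, z ∈ ball (x i) (r i / 3))
    {ρ : ℝ} (hρ0 : 0 < ρ) (hρ1 : ρ ≤ 1) (hρr : ρ ≤ 2 * r 0 / 3) :
    μ (ball z ρ) ≤ ENNReal.ofReal (300 * ρ ^ β) := by
  have hsmall : ∃ n, ¬ρ ≤ 2 * r n / 3 :=
    (hr.eventually_lt_const (by linarith : 0 < 3 * ρ / 2)).exists.imp fun n hn => by
      rw [not_le]; linarith
  obtain ⟨i, hi, hi'⟩ :=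
    exists_and_not_succ_of_exists_not (P := fun i => ρ ≤ 2 * r i / 3) hρr hsmall
  rw [not_le] at hi'
  by_cases hsub : ball z ρ ⊆ ball (x (i + 1)) (r (i + 1))
  · have hpow : r (i + 1) ^ ((1 + β) / 2) ≤ 3 / 2 * ρ ^ β :=
      rpow_le_mul_rpow_of_le_mul (by linarith) (by linarith) (by linarith) (by norm_num)
        (hrpos _).le (by linarith) hρ0 hρ1
    calc μ (ball z ρ) ≤ μ (ball (x (i + 1)) (r (i + 1))) := measure_mono hsub
      _ ≤ ENNReal.ofReal (r (i + 1) ^ ((1 + β) / 2)) := hb i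
      _ ≤ ENNReal.ofReal (300 * ρ ^ β) := ENNReal.ofReal_le_ofReal <| by
        linarith [Real.rpow_pos_of_pos hρ0 β]
  · have hzi := hz i
    rw [mem_ball] at hzi
    exact (hd i z (subset_closure (hz (i + 1))) ρ hρ0 hsub (ball_subset_ball' (by linarith))).le

theorem nested_balls_exponent_general (μ : Measure ℝ) [IsProbabilityMeasure μ]
    (β : ℝ) (hβ0 : 0 < β) (hβ1 : β < 1)
    (x xt : ℕ → ℝ) (r rt : ℕ → ℝ)
    (hrpos : ∀ i, 0 < r i) (hrtpos : ∀ i, 0 < rt i)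
    (hdec1 : ∀ i, rt i < r i)
    (ha1 : ∀ i, closure (ball (x (i + 1)) (r (i + 1))) ⊆ ball (xt i) (rt i / 3))
    (ha2 : ∀ i, ball (xt i) (rt i / 3) ⊆ ball (x i) (r i / 3))
    (hb : ∀ i, μ (ball (x (i + 1)) (r (i + 1)))
      ≤ ENNReal.ofReal (r (i + 1) ^ ((1 + β) / 2)))
    (hc : ∀ i, μ (ball (xt i) (rt i)) = ENNReal.ofReal (rt i ^ β))
    (hd : ∀ i, ∀ y ∈ closure (ball (x (i + 1)) (r (i + 1) / 3)), ∀ ρ : ℝ, 0 < ρ →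
      ¬ ball y ρ ⊆ ball (x (i + 1)) (r (i + 1)) → ball y ρ ⊆ ball (x i) (r i) →
      μ (ball y ρ) < ENNReal.ofReal (300 * ρ ^ β)) :
    Filter.Tendsto r Filter.atTop (nhds 0) ∧ Filter.Tendsto rt Filter.atTop (nhds 0) ∧
    ∃ z : ℝ, (⋂ i, closure (ball (x i) (r i))) = {z} ∧ locDim μ z = (β : EReal) := by
  have hcl : ∀ i, closure (ball (x i) (r i)) = closedBall (x i) (r i) :=
    fun i => closure_ball _ (hrpos i).ne'
  have hinner : ∀ i, closedBall (x (i + 1)) (r (i + 1)) ⊆ ball (xt i) (rt i / 3) :=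
    fun i => hcl (i + 1) ▸ ha1 i
  have hr : Tendsto r atTop (𝓝 0) :=
    tendsto_zero_of_le_geom (c := 1 / 3) (by norm_num) (by norm_num) (fun i => (hrpos i).le)
      fun i => by
        linarith [Real.lt_of_closedBall_subset_ball (hrpos _).le ((hinner i).trans (ha2 i))]
  have hrt : Tendsto rt atTop (𝓝 0) :=
    squeeze_zero (fun i => (hrtpos i).le) (fun i => (hdec1 i).le) hr
  obtain ⟨z, hz⟩ := exists_iInter_closedBall_eq_singleton (fun i => (hrpos i).le)
    (fun i => ((hinner i).trans (ha2 i)).trans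
      (ball_subset_closedBall.trans (closedBall_subset_closedBall (by linarith [hrpos i]))))
    hr
  have hzt : ∀ i, z ∈ ball (xt i) (rt i / 3) :=
    fun i => hinner i (mem_iInter.1 (hz ▸ mem_singleton z) (i + 1))
  refine ⟨hr, hrt, z, by simp_rw [hcl]; exact hz, ?_⟩
  refine locDim_eq_of_rpow_bounds μ (C := 300) (c := (1 / 2) ^ β) (u := fun i => 2 * rt i)
    (by norm_num) (by positivity) ?_ (fun i => by linarith [hrtpos i])
    (by simpa using hrt.const_mul 2) fun i => ?_
  · filter_upwards [Ioo_mem_nhdsGT (lt_min one_pos (by linarith [hrpos 0] : 0 < 2 * r 0 / 3))]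
      with ρ ⟨hρ0, hρ⟩
    exact measure_ball_le_of_nested μ hβ0 hβ1 hrpos hr hb hd (fun i => ha2 i (hzt i)) hρ0
      (hρ.le.trans (min_le_left _ _)) (hρ.le.trans (min_le_right _ _))
  · have hzti := hzt i
    rw [mem_ball, dist_comm] at hzti
    calc ENNReal.ofReal ((1 / 2) ^ β * (2 * rt i) ^ β) = μ (ball (xt i) (rt i)) := by
          rw [hc i, ← Real.mul_rpow (by norm_num) (by linarith [hrtpos i])]
          ring_nf
      _ ≤ μ (ball z (2 * rt i)) := measure_mono (ball_subset_ball' (by linarith [hrtpos i]))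

/-- Key lemma in the proof of the Darboux theorem: given a Borel probability measure `μ` on
`[0,1]`, `0 < β < 1`, `β' = (1+β)/2`, and interleaved sequences of balls
`B(x₀,r₀) ⊃ B(x̃₀,r̃₀) ⊃ B(x₁,r₁) ⊃ …` satisfying the nesting, upper-bound, equality and
maximal-type conditions (P0)-(P3), the radii tend to `0`, the closed balls intersect in a
single point `z`, and `h_μ(z) = β`. -/
theorem nested_balls_exponent (μ : Measure ℝ) [IsProbabilityMeasure μ]
    (β : ℝ) (hβ0 : 0 < β) (hβ1 : β < 1)
    (x xt : ℕ → ℝ) (r rt : ℕ → ℝ)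
    (hx : ∀ i, x i ∈ Set.Icc (0:ℝ) 1) (hxt : ∀ i, xt i ∈ Set.Icc (0:ℝ) 1)
    (hrpos : ∀ i, 0 < r i) (hrtpos : ∀ i, 0 < rt i)
    (hdec1 : ∀ i, rt i < r i) (hdec2 : ∀ i, r (i + 1) < rt i)
    (ha1 : ∀ i, closure (ball (x (i + 1)) (r (i + 1))) ⊆ ball (xt i) (rt i / 3))
    (ha2 : ∀ i, ball (xt i) (rt i / 3) ⊆ ball (x i) (r i / 3))
    (hb : ∀ i, μ (ball (x (i + 1)) (r (i + 1)))
      ≤ ENNReal.ofReal (r (i + 1) ^ ((1 + β) / 2)))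
    (hc : ∀ i, μ (ball (xt i) (rt i)) = ENNReal.ofReal (rt i ^ β))
    (hd : ∀ i, ∀ y ∈ closure (ball (x (i + 1)) (r (i + 1) / 3)), ∀ ρ : ℝ, 0 < ρ →
      ¬ ball y ρ ⊆ ball (x (i + 1)) (r (i + 1)) → ball y ρ ⊆ ball (x i) (r i) →
      μ (ball y ρ) < ENNReal.ofReal (300 * ρ ^ β)) :
    Filter.Tendsto r Filter.atTop (nhds 0) ∧ Filter.Tendsto rt Filter.atTop (nhds 0) ∧
    ∃ z : ℝ, (⋂ i, closure (ball (x i) (r i))) = {z} ∧ locDim μ z = (β : EReal) :=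
  nested_balls_exponent_general μ β hβ0 hβ1 x xt r rt hrpos hrtpos hdec1 ha1 ha2 hb hc hd
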